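/- Let p be a real number, and define the polynomials G_n(p) ∈ ℝ[t] by G_0(p) = 1 and G_n(p) = (p/n) Σ_{k=1}^{n} (−1)^{k+1} B_k · G_{n−k}(p) for n ≥ 1, where B_k ∈ ℝ[t] is the k-th Bernoulli polynomial. Then for every n ≥ 1, the derivative (in t) of G_n(p) equals (p + 1 − n) · G_{n−1}(p). -/

import Mathlib

open Finset Polynomial

/-!
Write `S_n = ∑_{k=1}^n (-1)^(k+1) B_k G_{n-k}`, so that `n G_n = p S_n`. Differentiating `S_n`
with `B_{k+1}' = (k+1) B_k` and, by strong induction, `G_j' = (p+1-j) G_{j-1}` for `j < n`, the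
`k = 1` term contributes `G_{n-1}` and all other terms collapse to `S_n' = G_{n-1} + (p-n) S_{n-1}`.
Hence `n G_n' = p G_{n-1} + (p-n)(n-1) G_{n-1} = n (p+1-n) G_{n-1}`.
-/

/-- The `k`-th Bernoulli polynomial as a real polynomial
(generating function `u e^{tu}/(e^u - 1)`, so `bernR 1 = X - 1/2`). -/
noncomputable def bernR (k : ℕ) : Polynomial ℝ :=
  (Polynomial.bernoulli k).map (algebraMap ℚ ℝ)

lemma bernR_zero : bernR 0 = 1 := by simp [bernR]

lemma derivative_bernR_succ (k : ℕ) :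
    derivative (bernR (k + 1)) = C ((k : ℝ) + 1) * bernR k := by
  rw [bernR, derivative_map, derivative_bernoulli_add_one, Polynomial.map_mul, bernR]
  simp

/-- `S_n = ∑_{k=1}^n (-1)^(k+1) B_k G_{n-k}`, reindexed by `i = k - 1`. -/
noncomputable def bernConv (G : ℕ → ℝ[X]) (n : ℕ) : ℝ[X] :=
  ∑ i ∈ range n, (-1) ^ i * bernR (i + 1) * G (n - 1 - i)

lemma bernConv_zero (G : ℕ → ℝ[X]) : bernConv G 0 = 0 := by simp [bernConv]

lemma bernConv_eq_sum_Icc (G : ℕ → ℝ[X]) (n : ℕ) :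
    bernConv G n = ∑ k ∈ Icc 1 n, (-1) ^ (k + 1) * bernR k * G (n - k) := by
  rw [← Ico_add_one_right_eq_Icc, sum_Ico_eq_sum_range, Nat.add_sub_cancel, bernConv]
  refine sum_congr rfl fun i _ => ?_
  rw [add_comm 1 i, Nat.sub_sub, add_comm 1 i, pow_succ, pow_succ]
  ring

lemma derivative_bernConv_succ (G : ℕ → ℝ[X]) (m : ℕ) :
    derivative (bernConv G (m + 1)) =
      ∑ i ∈ range (m + 1), (-1) ^ i * (C ((i : ℝ) + 1) * bernR i) * G (m - i) +
        ∑ i ∈ range (m + 1), (-1) ^ i * bernR (i + 1) * derivative (G (m - i)) := by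
  rw [bernConv, derivative_sum, ← sum_add_distrib]
  refine sum_congr rfl fun i _ => ?_
  rw [Nat.add_sub_cancel, derivative_mul, derivative_mul, derivative_bernR_succ,
    show ((-1 : ℝ[X]) ^ i) = C ((-1) ^ i) by simp, derivative_C]
  ring

lemma derivative_bernConv_succ_of_derivative {G : ℕ → ℝ[X]} {p : ℝ} {m : ℕ}
    (h0 : derivative (G 0) = 0)
    (hder : ∀ j, 1 ≤ j → j ≤ m → derivative (G j) = C (p + 1 - j) * G (j - 1)) :
    derivative (bernConv G (m + 1)) = G m + C (p - (m + 1)) * bernConv G m := by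
  have hbern : ∑ i ∈ range (m + 1), (-1) ^ i * (C ((i : ℝ) + 1) * bernR i) * G (m - i) =
      G m - ∑ i ∈ range m, (-1) ^ i * (C ((i : ℝ) + 2) * bernR (i + 1)) * G (m - 1 - i) := by
    rw [sum_range_succ', sub_eq_neg_add]
    simp only [pow_zero, Nat.cast_zero, zero_add, C_1, bernR_zero, one_mul, Nat.sub_zero,
      ← sum_neg_distrib]
    refine congrArg (· + G m) (sum_congr rfl fun i _ => ?_)
    rw [Nat.sub_sub, add_comm 1 i, pow_succ, Nat.cast_succ, add_assoc, one_add_one_eq_two]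
    ring
  have hG : ∑ i ∈ range (m + 1), (-1) ^ i * bernR (i + 1) * derivative (G (m - i)) =
      ∑ i ∈ range m, (-1) ^ i * bernR (i + 1) * (C (p + 1 - (m - i)) * G (m - 1 - i)) := by
    rw [sum_range_succ, Nat.sub_self, h0, mul_zero, add_zero]
    refine sum_congr rfl fun i hi => ?_
    have hi : i < m := mem_range.mp hi
    rw [hder (m - i) (by omega) (by omega), Nat.cast_sub hi.le, Nat.sub_sub, add_comm i 1,
      ← Nat.sub_sub]
  rw [derivative_bernConv_succ, hbern, hG, bernConv, mul_sum, sub_add_eq_add_sub, add_sub_assoc,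
    ← sum_sub_distrib]
  -- the factors `p + 1 - (m - i)` and `i + 2` differ by the constant `p - (m + 1)`
  congr 1
  refine sum_congr rfl fun i _ => ?_
  simp only [C_add, C_sub, C_1, C_ofNat, map_natCast]
  ring

/-- the derivative (in `t`) of `Gₙ(p)` equals `(p+1-n) G_{n-1}(p)`. -/
theorem G_derivative
    (p : ℝ)
    (G : ℕ → Polynomial ℝ) (hG0 : G 0 = 1)
    (hG : ∀ n : ℕ, 1 ≤ n →
      G n = Polynomial.C (p / (n : ℝ)) *
        ∑ k ∈ Finset.Icc 1 n, (-1 : Polynomial ℝ) ^ (k + 1) * bernR k * G (n - k)) :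
    ∀ n : ℕ, 1 ≤ n →
      Polynomial.derivative (G n) = Polynomial.C (p + 1 - (n : ℝ)) * G (n - 1) := by
  have hrec (n : ℕ) : C (n : ℝ) * G n = C p * bernConv G n := by
    rcases Nat.eq_zero_or_pos n with rfl | hn
    · simp [bernConv_zero]
    · rw [hG n hn, bernConv_eq_sum_Icc, ← mul_assoc, ← C_mul, mul_div_cancel₀]
      exact Nat.cast_ne_zero.mpr hn.ne'
  intro n hn
  induction n using Nat.strong_induction_on with
  | _ n ih =>
  obtain ⟨m, rfl⟩ := Nat.exists_eq_add_of_le' hn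
  have hconv := derivative_bernConv_succ_of_derivative (p := p) (m := m) (by simp [hG0])
    fun j hj hjm => ih j (by omega) hj
  refine mul_left_cancel₀ (C_ne_zero.mpr (Nat.cast_ne_zero.mpr m.succ_ne_zero) :
    C ((m + 1 : ℕ) : ℝ) ≠ 0) ?_
  calc C ((m + 1 : ℕ) : ℝ) * derivative (G (m + 1))
      = C p * derivative (bernConv G (m + 1)) := by rw [← derivative_C_mul, hrec, derivative_C_mul]
    _ = C p * G m + C (p - (m + 1)) * (C (m : ℝ) * G m) := by rw [hconv, hrec]; ring
    _ = C ((m + 1 : ℕ) : ℝ) * (C (p + 1 - ((m + 1 : ℕ) : ℝ)) * G (m + 1 - 1)) := by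
      simp only [Nat.add_sub_cancel, Nat.cast_add, Nat.cast_one, C_add, C_sub, C_1, map_natCast]
      ring
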